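/- Let ħ > 0, let Σ be a real symmetric positive definite 2n×2n matrix, and let Ω_Σ = {z ∈ ℝ^{2n} : (1/2) Σ⁻¹ z·z ≤ 1} be its covariance ellipsoid. Then there exists S ∈ Sp(n) such that S(B^{2n}(√ħ)) ⊆ Ω_Σ if and only if the symplectic polar dual satisfies Ω_Σ^{ħ,ω} ⊆ Ω_Σ. -/

import Mathlib

open Matrix ComplexOrder MeasureTheory

noncomputable section

/-- Phase space ℝ^{2n} ≃ ℝⁿ × ℝⁿ, with coordinates z = (x,p). -/
abbrev PS (n : ℕ) := Fin n ⊕ Fin n → ℝ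

/-- The standard symplectic matrix J = [[0, I], [-I, 0]]. -/
def Jmat (n : ℕ) : Matrix (Fin n ⊕ Fin n) (Fin n ⊕ Fin n) ℝ :=
  Matrix.fromBlocks 0 1 (-1) 0

/-- The standard symplectic form ω(z,z′) = (Jz)·z′. -/
def symp (n : ℕ) (z z' : PS n) : ℝ := (Jmat n).mulVec z ⬝ᵥ z'

/-- The symplectic group Sp(n) = {S : SᵀJS = J}. -/
def Sp (n : ℕ) : Set (Matrix (Fin n ⊕ Fin n) (Fin n ⊕ Fin n) ℝ) :=
  {S | Sᵀ * Jmat n * S = Jmat n}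

/-- Symplectic ℏ-polar dual Ω^{ℏ,ω} = {z′ : sup_{z∈Ω} ω(z,z′) ≤ ℏ}. -/
def sympDual (n : ℕ) (ℏ : ℝ) (Ω : Set (PS n)) : Set (PS n) :=
  {z' | ∀ z ∈ Ω, symp n z z' ≤ ℏ}

/-- The closed Euclidean ball B^{2n}(√ℏ) of radius √ℏ centered at 0. -/
def ball2n (n : ℕ) (ℏ : ℝ) : Set (PS n) := {z | z ⬝ᵥ z ≤ ℏ}

/-- The covariance ellipsoid Ω_Σ = {z : (1/2)Σ⁻¹z·z ≤ 1}. -/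
def covEll (n : ℕ) (Sig : Matrix (Fin n ⊕ Fin n) (Fin n ⊕ Fin n) ℝ) : Set (PS n) :=
  {z | (1 / 2 : ℝ) * (Sig⁻¹.mulVec z ⬝ᵥ z) ≤ 1}

/-
With `M = (ℏ/2) Σ⁻¹` the covariance ellipsoid is `{z | M z·z ≤ ℏ}`, the ball is `{z | z·z ≤ ℏ}`,
and the `ℏ`-polar dual of `{z | M z·z ≤ ℏ}` under `ω(z, z') = z·Jᵀz'` is `{z | J M⁻¹ Jᵀ z·z ≤ ℏ}`.
Inclusions between such ellipsoids are Loewner inequalities, so the theorem becomes: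
`Sᵀ M S ≤ 1` for some symplectic `S` iff `M ≤ J M⁻¹ Jᵀ`.

For a positive definite symplectic `X` one has `J X⁻¹ Jᵀ = X`. If `Sᵀ M S ≤ 1`, then
`X = (S Sᵀ)⁻¹` is such a matrix with `M ≤ X`, and inversion being antitone,
`M ≤ X = J X⁻¹ Jᵀ ≤ J M⁻¹ Jᵀ`. Conversely, if `M ≤ N := J M⁻¹ Jᵀ`, the geometric mean
`G = M # N` satisfies `M ≤ G`, and it is symplectic because it is the unique positive solution of
`X M⁻¹ X = N`, an equation that `J G⁻¹ Jᵀ` solves as well; then `S = G^{-1/2}` works.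
-/

open scoped MatrixOrder

namespace Matrix

variable {m : Type*}

lemma PosDef.transpose_eq {A : Matrix m m ℝ} (hA : A.PosDef) : Aᵀ = A :=
  (isHermitian_iff_isSymm.1 hA.isHermitian).eq

variable [Fintype m]

lemma le_iff_forall_dotProduct_mulVec_le {A B : Matrix m m ℝ} (hA : A.IsHermitian)
    (hB : B.IsHermitian) : A ≤ B ↔ ∀ z, z ⬝ᵥ A *ᵥ z ≤ z ⬝ᵥ B *ᵥ z := by
  rw [le_iff, posSemidef_iff_dotProduct_mulVec, and_iff_right (hB.sub hA)]
  simp [sub_mulVec, dotProduct_sub]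

lemma mul_mul_transpose_le_mul_mul_transpose {A B : Matrix m m ℝ} (h : A ≤ B)
    (C : Matrix m m ℝ) : C * A * Cᵀ ≤ C * B * Cᵀ := by
  simpa [star_eq_conjTranspose] using star_right_conjugate_le_conjugate h C

variable [DecidableEq m]

lemma PosDef.mul_mul_transpose {A : Matrix m m ℝ} (hA : A.PosDef) {C : Matrix m m ℝ}
    (hC : IsUnit C) : (C * A * Cᵀ).PosDef := by
  simpa only [star_eq_conjTranspose, conjTranspose_eq_transpose_of_trivial] using
    hC.posDef_star_right_conjugate_iff.2 hA

/- Both sides say that the block matrix `[[X, 1], [1, M⁻¹]]` is positive semidefinite: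
they are its two Schur complements. -/
lemma PosDef.le_iff_inv_le_inv {M X : Matrix m m ℝ} (hM : M.PosDef) (hX : X.PosDef) :
    M ≤ X ↔ X⁻¹ ≤ M⁻¹ := by
  let _ := hX.isUnit.invertible
  let _ := hM.isUnit.invertible
  let _ := hM.inv.isUnit.invertible
  have h₂₂ := PosDef.fromBlocks₂₂ X 1 hM.inv
  have h₁₁ := PosDef.fromBlocks₁₁ 1 M⁻¹ hX
  simp only [conjTranspose_one, Matrix.mul_one, Matrix.one_mul, inv_inv_of_invertible]
    at h₂₂ h₁₁
  rw [le_iff, le_iff, ← h₂₂, h₁₁]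

lemma one_le_sqrt_of_one_le {W : Matrix m m ℝ} (h : 1 ≤ W) : 1 ≤ CFC.sqrt W := by
  have hW : 0 ≤ W := zero_le_one.trans h
  rw [CFC.sqrt_eq_real_sqrt W, cfcₙ_eq_cfc]
  exact one_le_cfc _ W fun x hx => Real.one_le_sqrt.2 ((CFC.one_le_iff W).1 h x hx)

lemma posDef_sqrt {M : Matrix m m ℝ} (hM : M.PosDef) : (CFC.sqrt M).PosDef :=
  hM.isStrictlyPositive.sqrt.posDef

lemma exists_posDef_mul_self_eq {M : Matrix m m ℝ} (hM : M.PosDef) :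
    ∃ A : Matrix m m ℝ, A.PosDef ∧ A * A = M :=
  ⟨_, posDef_sqrt hM, CFC.sqrt_mul_sqrt_self M hM.posSemidef.nonneg⟩

def geomMean (M N : Matrix m m ℝ) : Matrix m m ℝ :=
  CFC.sqrt M * CFC.sqrt ((CFC.sqrt M)⁻¹ * N * (CFC.sqrt M)⁻¹) * CFC.sqrt M

lemma geomMean_mul_self {A : Matrix m m ℝ} (hA : A.PosDef) (N : Matrix m m ℝ) :
    geomMean (A * A) N = A * CFC.sqrt (A⁻¹ * N * A⁻¹) * A := by
  rw [geomMean, CFC.sqrt_unique rfl hA.posSemidef.nonneg]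

section geomMean

variable {M N X : Matrix m m ℝ} (hM : M.PosDef)
include hM

lemma geomMean_mul_inv_mul_geomMean (hN : N.PosSemidef) :
    geomMean M N * M⁻¹ * geomMean M N = N := by
  obtain ⟨A, hA, rfl⟩ := exists_posDef_mul_self_eq hM
  have hd : IsUnit A.det := (isUnit_iff_isUnit_det A).1 hA.isUnit
  have hBB := CFC.sqrt_mul_sqrt_self _
    (conjugate_nonneg_of_nonneg hN.nonneg hA.inv.posSemidef.nonneg)
  rw [geomMean_mul_self hA]
  generalize CFC.sqrt (A⁻¹ * N * A⁻¹) = B at hBB ⊢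
  calc A * B * A * (A * A)⁻¹ * (A * B * A) = A * (B * B) * A := by
        simp only [Matrix.mul_inv_rev, Matrix.mul_assoc, mul_nonsing_inv_cancel_left _ _ hd,
          nonsing_inv_mul_cancel_left _ _ hd]
    _ = N := by
        simp only [hBB, Matrix.mul_assoc, mul_nonsing_inv_cancel_left _ _ hd,
          nonsing_inv_mul _ hd, Matrix.mul_one]

lemma eq_geomMean_of_mul_inv_mul_self (hX : X.PosSemidef) (h : X * M⁻¹ * X = N) :
    X = geomMean M N := by
  obtain ⟨A, hA, rfl⟩ := exists_posDef_mul_self_eq hM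
  subst h
  have hd : IsUnit A.det := (isUnit_iff_isUnit_det A).1 hA.isUnit
  have hY : 0 ≤ A⁻¹ * X * A⁻¹ :=
    conjugate_nonneg_of_nonneg hX.nonneg hA.inv.posSemidef.nonneg
  have hYY : A⁻¹ * X * A⁻¹ * (A⁻¹ * X * A⁻¹) = A⁻¹ * (X * (A * A)⁻¹ * X) * A⁻¹ := by
    simp only [Matrix.mul_inv_rev, Matrix.mul_assoc]
  rw [geomMean_mul_self hA, CFC.sqrt_unique hYY hY]
  simp only [Matrix.mul_assoc, mul_nonsing_inv_cancel_left _ _ hd, nonsing_inv_mul _ hd,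
    Matrix.mul_one]

lemma le_geomMean (h : M ≤ N) : M ≤ geomMean M N := by
  obtain ⟨A, hA, rfl⟩ := exists_posDef_mul_self_eq hM
  have hd : IsUnit A.det := (isUnit_iff_isUnit_det A).1 hA.isUnit
  have hW : 1 ≤ A⁻¹ * N * A⁻¹ := by
    simpa [Matrix.mul_assoc, nonsing_inv_mul_cancel_left _ _ hd, mul_nonsing_inv _ hd] using
      conjugate_le_conjugate_of_nonneg h hA.inv.posSemidef.nonneg
  simpa [geomMean_mul_self hA] using
    conjugate_le_conjugate_of_nonneg (one_le_sqrt_of_one_le hW) hA.posSemidef.nonneg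

lemma posDef_geomMean (hN : N.PosDef) : (geomMean M N).PosDef := by
  obtain ⟨A, hA, rfl⟩ := exists_posDef_mul_self_eq hM
  have hW := hN.mul_mul_transpose hA.inv.isUnit
  rw [hA.inv.transpose_eq] at hW
  simpa only [geomMean_mul_self hA, hA.transpose_eq] using
    (posDef_sqrt hW).mul_mul_transpose hA.isUnit

end geomMean

lemma isUnit_J (l R : Type*) [Fintype l] [DecidableEq l] [CommRing R] : IsUnit (J l R) :=
  (isUnit_iff_isUnit_det _).2 (isUnit_det_J l R)

end Matrix

namespace SymplecticGroup

open Matrix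

variable {l : Type*} [Fintype l] [DecidableEq l]

lemma nonsing_inv_mem {S : Matrix (l ⊕ l) (l ⊕ l) ℝ} (hS : S ∈ symplecticGroup l ℝ) :
    S⁻¹ ∈ symplecticGroup l ℝ := by
  simpa [coe_inv'] using (⟨S, hS⟩⁻¹ : symplecticGroup l ℝ).2

lemma mem_iff_of_posDef {X : Matrix (l ⊕ l) (l ⊕ l) ℝ} (hX : X.PosDef) :
    X ∈ symplecticGroup l ℝ ↔ J l ℝ * X⁻¹ * (J l ℝ)ᵀ = X := by
  have hd : IsUnit X.det := (isUnit_iff_isUnit_det X).1 hX.isUnit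
  have hJJ : -J l ℝ * J l ℝ = 1 := by rw [Matrix.neg_mul, J_squared, neg_neg]
  have hJJ' : J l ℝ * -J l ℝ = 1 := by rw [Matrix.mul_neg, J_squared, neg_neg]
  rw [mem_iff, hX.transpose_eq, J_transpose]
  constructor
  · intro h
    calc J l ℝ * X⁻¹ * -J l ℝ = X * J l ℝ * X * X⁻¹ * -J l ℝ := by rw [h]
      _ = X := by rw [mul_nonsing_inv_cancel_right _ _ hd, Matrix.mul_assoc, hJJ', Matrix.mul_one]
  · intro h
    have hXJ : X * J l ℝ = J l ℝ * X⁻¹ := by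
      nth_rw 1 [← h]
      rw [Matrix.mul_assoc _ (-J l ℝ), hJJ, Matrix.mul_one]
    rw [hXJ, nonsing_inv_mul_cancel_right _ _ hd]

lemma exists_posDef_mem_mul_self_eq {X : Matrix (l ⊕ l) (l ⊕ l) ℝ} (hX : X.PosDef)
    (h : X ∈ symplecticGroup l ℝ) :
    ∃ R, R.PosDef ∧ R ∈ symplecticGroup l ℝ ∧ R * R = X := by
  obtain ⟨R, hR, rfl⟩ := exists_posDef_mul_self_eq hX
  refine ⟨R, hR, (mem_iff_of_posDef hR).2 ?_, rfl⟩
  have hJR := hR.inv.mul_mul_transpose (isUnit_J l ℝ)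
  have hJJ : (J l ℝ)ᵀ * J l ℝ = 1 := by rw [J_transpose, Matrix.neg_mul, J_squared, neg_neg]
  rw [← CFC.mul_self_eq_mul_self_iff _ _ hJR.posSemidef.nonneg hR.posSemidef.nonneg]
  calc J l ℝ * R⁻¹ * (J l ℝ)ᵀ * (J l ℝ * R⁻¹ * (J l ℝ)ᵀ)
      = J l ℝ * (R⁻¹ * ((J l ℝ)ᵀ * J l ℝ) * R⁻¹) * (J l ℝ)ᵀ := by
        simp only [Matrix.mul_assoc]
    _ = R * R := by rw [hJJ, Matrix.mul_one, ← Matrix.mul_inv_rev, (mem_iff_of_posDef hX).1 h]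

/- `J G⁻¹ Jᵀ` solves the same Riccati equation `X M⁻¹ X = J M⁻¹ Jᵀ` as the geometric mean `G`,
so it equals `G`. -/
lemma geomMean_mem {M : Matrix (l ⊕ l) (l ⊕ l) ℝ} (hM : M.PosDef) :
    geomMean M (J l ℝ * M⁻¹ * (J l ℝ)ᵀ) ∈ symplecticGroup l ℝ := by
  set N := J l ℝ * M⁻¹ * (J l ℝ)ᵀ
  have hN : N.PosDef := hM.inv.mul_mul_transpose (isUnit_J l ℝ)
  have hG := posDef_geomMean hM hN
  have hGMG := geomMean_mul_inv_mul_geomMean hM hN.posSemidef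
  rw [mem_iff_of_posDef hG]
  refine eq_geomMean_of_mul_inv_mul_self hM
    (hG.inv.mul_mul_transpose (isUnit_J l ℝ)).posSemidef ?_
  generalize geomMean M N = G at hG hGMG ⊢
  have hGd : IsUnit G.det := (isUnit_iff_isUnit_det _).1 hG.isUnit
  have hJMJ : (J l ℝ)ᵀ * M⁻¹ * J l ℝ = N := by simp [N, J_transpose]
  have hGNG : G⁻¹ * N * G⁻¹ = M⁻¹ := by
    rw [← hGMG]
    simp only [Matrix.mul_assoc, nonsing_inv_mul_cancel_left _ _ hGd, mul_nonsing_inv _ hGd,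
      Matrix.mul_one]
  calc J l ℝ * G⁻¹ * (J l ℝ)ᵀ * M⁻¹ * (J l ℝ * G⁻¹ * (J l ℝ)ᵀ)
      = J l ℝ * (G⁻¹ * ((J l ℝ)ᵀ * M⁻¹ * J l ℝ) * G⁻¹) * (J l ℝ)ᵀ := by
        simp only [Matrix.mul_assoc]
    _ = N := by rw [hJMJ, hGNG]

lemma le_J_mul_inv_mul_transpose_of_le {M X : Matrix (l ⊕ l) (l ⊕ l) ℝ} (hM : M.PosDef)
    (hX : X.PosDef) (hXS : X ∈ symplecticGroup l ℝ) (h : M ≤ X) :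
    M ≤ J l ℝ * M⁻¹ * (J l ℝ)ᵀ :=
  calc M ≤ X := h
    _ = J l ℝ * X⁻¹ * (J l ℝ)ᵀ := ((mem_iff_of_posDef hX).1 hXS).symm
    _ ≤ J l ℝ * M⁻¹ * (J l ℝ)ᵀ :=
      mul_mul_transpose_le_mul_mul_transpose ((hM.le_iff_inv_le_inv hX).1 h) _

theorem exists_transpose_mul_mul_le_one_iff {M : Matrix (l ⊕ l) (l ⊕ l) ℝ} (hM : M.PosDef) :
    (∃ S ∈ symplecticGroup l ℝ, Sᵀ * M * S ≤ 1) ↔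
      M ≤ J l ℝ * M⁻¹ * (J l ℝ)ᵀ := by
  constructor
  · rintro ⟨S, hS, hSMS⟩
    have hSi := nonsing_inv_mem hS
    have hSd := symplectic_det hS
    have hX : ((S⁻¹)ᵀ * S⁻¹).PosDef := by
      simpa only [Matrix.mul_one, transpose_transpose] using PosDef.one.mul_mul_transpose
        ((isUnit_transpose _).2 (isUnit_nonsing_inv_iff.2 ((isUnit_iff_isUnit_det S).2 hSd)))
    have hMX : M ≤ (S⁻¹)ᵀ * S⁻¹ := by
      have hcancel : (S⁻¹)ᵀ * (Sᵀ * M * S) * S⁻¹ = M := by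
        rw [← Matrix.mul_assoc, ← Matrix.mul_assoc, ← transpose_mul, mul_nonsing_inv _ hSd,
          transpose_one, Matrix.one_mul, mul_nonsing_inv_cancel_right _ _ hSd]
      simpa only [transpose_transpose, Matrix.mul_one, hcancel] using
        mul_mul_transpose_le_mul_mul_transpose hSMS (S⁻¹)ᵀ
    exact le_J_mul_inv_mul_transpose_of_le hM hX (mul_mem (transpose_mem hSi) hSi) hMX
  · intro h
    set G := geomMean M (J l ℝ * M⁻¹ * (J l ℝ)ᵀ)
    have hG : G.PosDef := posDef_geomMean hM (hM.inv.mul_mul_transpose (isUnit_J l ℝ))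
    obtain ⟨R, hR, hRS, hRG⟩ := exists_posDef_mem_mul_self_eq hG (geomMean_mem hM)
    have hRd : IsUnit R.det := (isUnit_iff_isUnit_det R).1 hR.isUnit
    refine ⟨R⁻¹, nonsing_inv_mem hRS, ?_⟩
    calc (R⁻¹)ᵀ * M * R⁻¹ = R⁻¹ * M * R⁻¹ := by rw [hR.inv.transpose_eq]
      _ ≤ R⁻¹ * (R * R) * R⁻¹ := by
        rw [hRG]
        exact conjugate_le_conjugate_of_nonneg (le_geomMean hM h) hR.inv.posSemidef.nonneg
      _ = 1 := by
        rw [nonsing_inv_mul_cancel_left _ _ hRd, mul_nonsing_inv _ hRd]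

end SymplecticGroup

section Ellipsoid

open Matrix

variable {m : Type*} [Fintype m]

def ellipsoid (M : Matrix m m ℝ) (r : ℝ) : Set (m → ℝ) := {z | z ⬝ᵥ M *ᵥ z ≤ r}

lemma preimage_mulVec_ellipsoid (S M : Matrix m m ℝ) (r : ℝ) :
    S.mulVec ⁻¹' ellipsoid M r = ellipsoid (Sᵀ * M * S) r := by
  ext z
  simp only [ellipsoid, Set.mem_preimage, Set.mem_ofPred_eq, ← mulVec_mulVec,
    dotProduct_mulVec z Sᵀ, vecMul_transpose]

lemma smul_dotProduct_mulVec_smul (M : Matrix m m ℝ) (t : ℝ) (z : m → ℝ) :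
    (t • z) ⬝ᵥ M *ᵥ (t • z) = t ^ 2 * (z ⬝ᵥ M *ᵥ z) := by
  simp only [mulVec_smul, smul_dotProduct, dotProduct_smul, smul_eq_mul]
  ring

lemma ellipsoid_subset_ellipsoid_iff {M N : Matrix m m ℝ} (hM : M.PosDef) (hN : N.IsHermitian)
    {r : ℝ} (hr : 0 < r) : ellipsoid M r ⊆ ellipsoid N r ↔ N ≤ M := by
  rw [le_iff_forall_dotProduct_mulVec_le hN hM.isHermitian]
  refine ⟨fun h z => ?_, fun h z hz => (h z).trans hz⟩
  rcases eq_or_ne z 0 with rfl | hz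
  · simp
  have hc : 0 < z ⬝ᵥ M *ᵥ z := by simpa using hM.dotProduct_mulVec_pos hz
  set t := √(r / z ⬝ᵥ M *ᵥ z)
  have ht : r = t ^ 2 * (z ⬝ᵥ M *ᵥ z) := by
    rw [Real.sq_sqrt (by positivity), div_mul_cancel₀ _ hc.ne']
  have hmem : t • z ∈ ellipsoid M r := by
    simp only [ellipsoid, Set.mem_ofPred_eq, smul_dotProduct_mulVec_smul, ← ht, le_refl]
  have key : t ^ 2 * (z ⬝ᵥ N *ᵥ z) ≤ t ^ 2 * (z ⬝ᵥ M *ᵥ z) := by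
    simpa only [ellipsoid, Set.mem_ofPred_eq, smul_dotProduct_mulVec_smul, ← ht] using h hmem
  exact le_of_mul_le_mul_left key (by positivity)

variable [DecidableEq m]

lemma two_mul_dotProduct_le {M : Matrix m m ℝ} (hM : M.PosDef) (z w : m → ℝ) :
    2 * (z ⬝ᵥ w) ≤ z ⬝ᵥ M *ᵥ z + w ⬝ᵥ M⁻¹ *ᵥ w := by
  have h := hM.posSemidef.dotProduct_mulVec_nonneg (z - M⁻¹ *ᵥ w)
  have hMM : M *ᵥ (M⁻¹ *ᵥ w) = w := by
    rw [mulVec_mulVec, mul_nonsing_inv _ ((isUnit_iff_isUnit_det M).1 hM.isUnit), one_mulVec]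
  rw [star_trivial, mulVec_sub, hMM, sub_dotProduct, dotProduct_sub, dotProduct_sub,
    dotProduct_mulVec (M⁻¹ *ᵥ w), ← mulVec_transpose, hM.transpose_eq, hMM] at h
  rw [dotProduct_comm (M⁻¹ *ᵥ w), dotProduct_comm w z] at h
  linarith

lemma polar_ellipsoid {M : Matrix m m ℝ} (hM : M.PosDef) {r : ℝ} (hr : 0 < r) :
    {w | ∀ z ∈ ellipsoid M r, z ⬝ᵥ w ≤ r} = ellipsoid M⁻¹ r := by
  ext w
  refine ⟨fun h => ?_, fun hw z hz => ?_⟩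
  swap
  · have hw' : w ⬝ᵥ M⁻¹ *ᵥ w ≤ r := hw
    have hz' : z ⬝ᵥ M *ᵥ z ≤ r := hz
    linarith [two_mul_dotProduct_le hM z w]
  set c := w ⬝ᵥ M⁻¹ *ᵥ w
  have hc : 0 ≤ c := by simpa using hM.inv.posSemidef.dotProduct_mulVec_nonneg w
  have hMw : (M⁻¹ *ᵥ w) ⬝ᵥ M *ᵥ (M⁻¹ *ᵥ w) = c := by
    rw [mulVec_mulVec, mul_nonsing_inv _ ((isUnit_iff_isUnit_det M).1 hM.isUnit), one_mulVec,
      dotProduct_comm]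
  -- Test against `t • M⁻¹ w` with `t = 2r / (r + c)`, a square-root-free stand-in for `√(r / c)`:
  -- it lies in the ellipsoid by AM-GM, and pairs with `w` to `2rc / (r + c)`, which exceeds `r`
  -- as soon as `c > r`.
  have key := h ((2 * r / (r + c)) • M⁻¹ *ᵥ w) (by
    simp only [ellipsoid, Set.mem_ofPred_eq, smul_dotProduct_mulVec_smul, hMw]
    rw [div_pow, div_mul_eq_mul_div, div_le_iff₀ (by positivity)]
    nlinarith [sq_nonneg (r - c)])
  rw [smul_dotProduct, dotProduct_comm, smul_eq_mul, div_mul_eq_mul_div,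
    div_le_iff₀ (by positivity)] at key
  show c ≤ r
  nlinarith

end Ellipsoid

section PhaseSpace

open Matrix

variable {n : ℕ}

lemma Jmat_eq_neg_J : Jmat n = -J (Fin n) ℝ := by
  rw [Jmat, J, fromBlocks_neg]
  simp

lemma mem_Sp_iff {S : Matrix (Fin n ⊕ Fin n) (Fin n ⊕ Fin n) ℝ} :
    S ∈ Sp n ↔ S ∈ symplecticGroup (Fin n) ℝ := by
  rw [SymplecticGroup.mem_iff', Sp, Set.mem_ofPred_eq, Jmat_eq_neg_J, Matrix.mul_neg,
    Matrix.neg_mul, neg_inj]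

lemma symp_eq_dotProduct (z z' : PS n) : symp n z z' = z ⬝ᵥ (Jmat n)ᵀ *ᵥ z' := by
  rw [symp, mulVec_transpose, dotProduct_comm z, ← dotProduct_mulVec, dotProduct_comm]

lemma ball2n_eq_ellipsoid (ℏ : ℝ) : ball2n n ℏ = ellipsoid 1 ℏ := by
  simp [ball2n, ellipsoid]

lemma covEll_eq_ellipsoid {ℏ : ℝ} (hℏ : 0 < ℏ)
    (Sig : Matrix (Fin n ⊕ Fin n) (Fin n ⊕ Fin n) ℝ) :
    covEll n Sig = ellipsoid ((ℏ / 2) • Sig⁻¹) ℏ := by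
  ext z
  change 1 / 2 * (Sig⁻¹ *ᵥ z ⬝ᵥ z) ≤ 1 ↔ z ⬝ᵥ ((ℏ / 2) • Sig⁻¹) *ᵥ z ≤ ℏ
  rw [smul_mulVec, dotProduct_smul, smul_eq_mul, dotProduct_comm z]
  constructor <;> intro h <;> nlinarith

lemma sympDual_ellipsoid {M : Matrix (Fin n ⊕ Fin n) (Fin n ⊕ Fin n) ℝ} (hM : M.PosDef)
    {ℏ : ℝ} (hℏ : 0 < ℏ) :
    sympDual n ℏ (ellipsoid M ℏ) =
      ellipsoid (J (Fin n) ℝ * M⁻¹ * (J (Fin n) ℝ)ᵀ) ℏ := by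
  have : sympDual n ℏ (ellipsoid M ℏ) =
      (Jmat n)ᵀ.mulVec ⁻¹' {w | ∀ z ∈ ellipsoid M ℏ, z ⬝ᵥ w ≤ ℏ} := by
    ext z'
    simp only [sympDual, symp_eq_dotProduct, Set.mem_preimage, Set.mem_ofPred_eq]
  rw [this, polar_ellipsoid hM hℏ, preimage_mulVec_ellipsoid, transpose_transpose, Jmat_eq_neg_J]
  simp

end PhaseSpace

theorem quantum_blob_iff_sympDual_subset (n : ℕ) (ℏ : ℝ) (hℏ : 0 < ℏ)
    (Sig : Matrix (Fin n ⊕ Fin n) (Fin n ⊕ Fin n) ℝ) (hSig : Sig.PosDef) :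
    (∃ S ∈ Sp n, S.mulVec '' ball2n n ℏ ⊆ covEll n Sig) ↔
      sympDual n ℏ (covEll n Sig) ⊆ covEll n Sig := by
  have hM : ((ℏ / 2) • Sig⁻¹).PosDef := hSig.inv.smul (by positivity)
  have hN := hM.inv.mul_mul_transpose (isUnit_J (Fin n) ℝ)
  rw [covEll_eq_ellipsoid hℏ, sympDual_ellipsoid hM hℏ,
    ellipsoid_subset_ellipsoid_iff hN hM.isHermitian hℏ,
    ← SymplecticGroup.exists_transpose_mul_mul_le_one_iff hM]
  simp only [Set.image_subset_iff, preimage_mulVec_ellipsoid, ball2n_eq_ellipsoid, mem_Sp_iff]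
  refine exists_congr fun S => and_congr_right fun _ =>
    ellipsoid_subset_ellipsoid_iff PosDef.one ?_ hℏ
  simpa using (hM.posSemidef.conjTranspose_mul_mul_same S).isHermitian
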